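/- arXiv:2006.13697 — 2 statements merged into one kernel-verified Lean document; each statement's English description precedes it below -/
import Mathlib

section
/- Let d ≥ 1 be an integer and ε ∈ ℂ with ε ≠ 0. For every w ∈ ℂ with w^{2d} = 1 and every fixed point p of τ in f⁻¹(ε), the point a(w,p) is again a fixed point of τ in f⁻¹(ε) with |a(w,p)| = |p|. Moreover, this ℤ/2d-subaction permutes the fixed points transitively: for any two fixed points p, p′ of τ in f⁻¹(ε), there exists w ∈ ℂ with w^{2d} = 1 and a(w,p) = p′. -/
noncomputable section

/-- The Brieskorn polynomial `f(z) = z₀^d + z₁² + z₂² + z₃²` on `ℂ⁴`. -/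
def brieskorn (d : ℕ) (z : EuclideanSpace ℂ (Fin 4)) : ℂ :=
  z 0 ^ d + z 1 ^ 2 + z 2 ^ 2 + z 3 ^ 2

/-- The involution `τ(z₀,z₁,z₂,z₃) = (z₀, -z₁, -z₂, -z₃)` on `ℂ⁴`. -/
def brieskornTau (z : EuclideanSpace ℂ (Fin 4)) : EuclideanSpace ℂ (Fin 4) :=
  WithLp.toLp 2 (fun i => if i = 0 then z i else -(z i))

/-- The circle-type action `a(w,z) = (w²z₀, w^d z₁, w^d z₂, w^d z₃)`. -/
def aAct (d : ℕ) (w : ℂ) (z : EuclideanSpace ℂ (Fin 4)) : EuclideanSpace ℂ (Fin 4) :=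
  WithLp.toLp 2 (fun i => if i = 0 then w ^ 2 * z i else w ^ d * z i)

lemma tau_fixed_coords (p : EuclideanSpace ℂ (Fin 4)) (hp : brieskornTau p = p) :
    p 1 = 0 ∧ p 2 = 0 ∧ p 3 = 0 := by
  refine ⟨?_, ?_, ?_⟩
  · have h := congrFun (congrArg WithLp.ofLp hp) 1
    simp [brieskornTau] at h
    linear_combination -h / 2
  · have h := congrFun (congrArg WithLp.ofLp hp) 2
    simp [brieskornTau] at h
    linear_combination -h / 2
  · have h := congrFun (congrArg WithLp.ofLp hp) 3
    simp [brieskornTau] at h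
    linear_combination -h / 2

/-- For `ε ≠ 0`, the `ℤ/2d`-subaction `a(w,·)` (for `w^{2d} = 1`) maps fixed
points of `τ` in `f⁻¹(ε)` to fixed points of the same norm, and it permutes
these fixed points transitively. -/
theorem aAct_permutes_fixedPoints (d : ℕ) (hd : 1 ≤ d) (ε : ℂ) (hε : ε ≠ 0) :
    (∀ w : ℂ, w ^ (2 * d) = 1 →
      ∀ p : EuclideanSpace ℂ (Fin 4), brieskorn d p = ε → brieskornTau p = p →
        brieskorn d (aAct d w p) = ε ∧
        brieskornTau (aAct d w p) = aAct d w p ∧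
        ‖aAct d w p‖ = ‖p‖) ∧
    ∀ p p' : EuclideanSpace ℂ (Fin 4),
      brieskorn d p = ε → brieskornTau p = p →
      brieskorn d p' = ε → brieskornTau p' = p' →
      ∃ w : ℂ, w ^ (2 * d) = 1 ∧ aAct d w p = p' := by
  constructor
  · intro w hw p hpe hpt
    obtain ⟨h1, h2, h3⟩ := tau_fixed_coords p hpt
    have hw1 : ‖w‖ = 1 := by
      have := congrArg norm hw
      rw [norm_pow, norm_one] at this
      have h2d : 2 * d ≠ 0 := by omega
      exact (pow_left_inj₀ (norm_nonneg w) zero_le_one h2d).mp (by simpa using this)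
    refine ⟨?_, ?_, ?_⟩
    · have : brieskorn d (aAct d w p) = w ^ (2 * d) * brieskorn d p := by
        simp only [brieskorn, aAct, WithLp.ofLp_toLp, if_pos rfl, if_true, if_neg (show (1 : Fin 4) ≠ 0 by decide),
          if_neg (show (2 : Fin 4) ≠ 0 by decide), if_neg (show (3 : Fin 4) ≠ 0 by decide)]
        ring
      rw [this, hw, one_mul, hpe]
    · ext i
      fin_cases i <;> simp [brieskornTau, aAct, h1, h2, h3]
    · have hcoord : ∀ i, ‖aAct d w p i‖ = ‖p i‖ := by
        intro i
        by_cases h : i = 0 <;> simp [aAct, h, norm_mul, norm_pow, hw1]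
      rw [EuclideanSpace.norm_eq, EuclideanSpace.norm_eq]
      simp only [hcoord]
  · intro p p' hpe hpt hpe' hpt'
    obtain ⟨h1, h2, h3⟩ := tau_fixed_coords p hpt
    obtain ⟨h1', h2', h3'⟩ := tau_fixed_coords p' hpt'
    have hp0 : p 0 ^ d = ε := by
      have := hpe; simp only [brieskorn, h1, h2, h3] at this; simpa using this
    have hp0' : p' 0 ^ d = ε := by
      have := hpe'; simp only [brieskorn, h1', h2', h3'] at this; simpa using this
    have hpne : p 0 ≠ 0 := by
      intro h
      rw [h, zero_pow (by omega)] at hp0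
      exact hε hp0.symm
    obtain ⟨w, hw2⟩ := IsAlgClosed.exists_pow_nat_eq (p' 0 / p 0) (n := 2) (by norm_num)
    have hwpow : w ^ (2 * d) = 1 := by
      rw [pow_mul, hw2, div_pow, hp0, hp0', div_self hε]
    refine ⟨w, hwpow, ?_⟩
    ext i
    fin_cases i <;>
      simp [aAct, h1, h2, h3, h1', h2', h3', hw2, div_mul_cancel₀ _ hpne]
end
end

section
/- Let d ≥ 1 be an integer. There is a unique real number t_d ∈ [0,1] with t_d^d + t_d² = 1, and the image of the Brieskorn link Σ_0(d) under the map z ↦ |z₀| is exactly the closed interval [0, t_d]. In particular, the orbit space of the S¹ × O(3) cohomogeneity one action on Σ_0(d) is parametrized by an interval. -/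
noncomputable section

lemma gmono (d : ℕ) (hd : 1 ≤ d) : StrictMonoOn (fun t : ℝ => t ^ d + t ^ 2) (Set.Ici 0) := by
  intro a ha b hb hab
  have h1 : a ^ d ≤ b ^ d := pow_le_pow_left₀ ha hab.le d
  have h2 : a ^ 2 < b ^ 2 := by
    apply pow_lt_pow_left₀ hab ha; norm_num
  simpa using add_lt_add_of_le_of_lt h1 h2

lemma gex (d : ℕ) (hd : 1 ≤ d) : ∃ t ∈ Set.Icc (0:ℝ) 1, t ^ d + t ^ 2 = 1 := by
  have hc : ContinuousOn (fun t : ℝ => t ^ d + t ^ 2) (Set.Icc 0 1) := by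
    fun_prop
  have h01 : (1:ℝ) ∈ Set.Icc ((fun t : ℝ => t ^ d + t ^ 2) 0) ((fun t : ℝ => t ^ d + t ^ 2) 1) := by
    simp [zero_pow (by omega : d ≠ 0)]
  obtain ⟨t, ht, heq⟩ := intermediate_value_Icc (by norm_num : (0:ℝ) ≤ 1) hc h01
  exact ⟨t, ht, heq⟩

/-- There is a unique `t_d ∈ [0,1]` with `t_d^d + t_d² = 1`, and the image of
the Brieskorn link `Σ_0(d)` under `z ↦ |z₀|` is exactly the interval `[0, t_d]`;
this interval parametrizes the orbit space of the cohomogeneity one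
`S¹ × O(3)`-action on `Σ_0(d)`. -/
theorem orbit_space_interval (d : ℕ) (hd : 1 ≤ d) :
    ∃ t : ℝ, (t ∈ Set.Icc (0 : ℝ) 1 ∧ t ^ d + t ^ 2 = 1) ∧
      (∀ s : ℝ, s ∈ Set.Icc (0 : ℝ) 1 → s ^ d + s ^ 2 = 1 → s = t) ∧
      (fun z : EuclideanSpace ℂ (Fin 4) => ‖z 0‖) ''
          {z : EuclideanSpace ℂ (Fin 4) | brieskorn d z = 0 ∧ ‖z‖ = 1} =
        Set.Icc 0 t := by
  obtain ⟨t, ht, heq⟩ := gex d hd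
  refine ⟨t, ⟨ht, heq⟩, ?_, ?_⟩
  · intro s hs hseq
    exact (gmono d hd).injOn (Set.mem_Ici.mpr hs.1) (Set.mem_Ici.mpr ht.1)
      (by show s ^ d + s ^ 2 = t ^ d + t ^ 2; rw [hseq, heq])
  · ext s
    constructor
    · rintro ⟨z, ⟨hb, hn⟩, rfl⟩
      simp only
      have hsum : ∑ i : Fin 4, ‖z i‖ ^ 2 = 1 := by
        have := EuclideanSpace.norm_eq z
        rw [hn] at this
        have h2 : Real.sqrt (∑ i : Fin 4, ‖z i‖ ^ 2) = 1 := this.symm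
        have hnn : (0:ℝ) ≤ ∑ i : Fin 4, ‖z i‖ ^ 2 :=
          Finset.sum_nonneg fun i _ => sq_nonneg ‖z i‖
        calc ∑ i : Fin 4, ‖z i‖ ^ 2 = Real.sqrt (∑ i : Fin 4, ‖z i‖ ^ 2) ^ 2 :=
              (Real.sq_sqrt hnn).symm
        _ = 1 := by rw [h2]; norm_num
      rw [Fin.sum_univ_four] at hsum
      have hz0 : z 0 ^ d = -(z 1 ^ 2 + z 2 ^ 2 + z 3 ^ 2) := by
        have : z 0 ^ d + z 1 ^ 2 + z 2 ^ 2 + z 3 ^ 2 = 0 := hb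
        linear_combination this
      have habs : ‖z 0‖ ^ d ≤ ‖z 1‖ ^ 2 + ‖z 2‖ ^ 2 + ‖z 3‖ ^ 2 := by
        calc ‖z 0‖ ^ d = ‖z 0 ^ d‖ := (norm_pow _ _).symm
        _ = ‖z 1 ^ 2 + z 2 ^ 2 + z 3 ^ 2‖ := by rw [hz0, norm_neg]
        _ ≤ ‖z 1 ^ 2‖ + ‖z 2 ^ 2‖ + ‖z 3 ^ 2‖ := by
            refine (norm_add_le _ _).trans ?_
            gcongr
            exact norm_add_le _ _
        _ = ‖z 1‖ ^ 2 + ‖z 2‖ ^ 2 + ‖z 3‖ ^ 2 := by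
            rw [norm_pow, norm_pow, norm_pow]
      have hle1 : ‖z 0‖ ^ d + ‖z 0‖ ^ 2 ≤ 1 := by
        have : ‖z 0‖ ^ 2 = ‖z 0‖ ^ 2 := rfl
        nlinarith [habs, hsum]
      constructor
      · exact norm_nonneg _
      · by_contra hgt
        push_neg at hgt
        have := gmono d hd (Set.mem_Ici.mpr ht.1) (Set.mem_Ici.mpr (norm_nonneg (z 0))) hgt
        simp only at this
        rw [heq] at this
        linarith
    · rintro ⟨hs0, hst⟩
      have hsle : s ^ d + s ^ 2 ≤ 1 := by
        rcases eq_or_lt_of_le hst with h | h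
        · rw [h, heq]
        · have := gmono d hd (Set.mem_Ici.mpr hs0) (Set.mem_Ici.mpr ht.1) h
          simp only at this
          rw [heq] at this
          linarith
      set a := Real.sqrt ((1 - s ^ 2 - s ^ d) / 2) with ha
      set b := Real.sqrt ((1 - s ^ 2 + s ^ d) / 2) with hbdef
      have hsd0 : 0 ≤ s ^ d := pow_nonneg hs0 d
      have haa : a ^ 2 = (1 - s ^ 2 - s ^ d) / 2 := Real.sq_sqrt (by linarith)
      have hbb : b ^ 2 = (1 - s ^ 2 + s ^ d) / 2 := Real.sq_sqrt (by nlinarith)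
      have ha0 : 0 ≤ a := Real.sqrt_nonneg _
      have hb0 : 0 ≤ b := Real.sqrt_nonneg _
      refine ⟨(WithLp.equiv 2 (Fin 4 → ℂ)).symm ![(s:ℂ), (a:ℂ), (b:ℂ) * Complex.I, 0], ⟨?_, ?_⟩, ?_⟩
      · show ((s:ℂ)) ^ d + ((a:ℂ)) ^ 2 + ((b:ℂ) * Complex.I) ^ 2 + (0:ℂ) ^ 2 = 0
        have : ((b:ℂ) * Complex.I) ^ 2 = -((b:ℂ) ^ 2) := by
          rw [mul_pow, Complex.I_sq]; ring
        rw [this]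
        push_cast
        rw [← Complex.ofReal_pow, ← Complex.ofReal_pow, ← Complex.ofReal_pow]
        rw [haa, hbb]
        push_cast
        ring
      · rw [EuclideanSpace.norm_eq, Fin.sum_univ_four]
        have e0 : ‖((WithLp.equiv 2 (Fin 4 → ℂ)).symm ![(s:ℂ), (a:ℂ), (b:ℂ) * Complex.I, 0]) 0‖ = s := by
          show ‖(s:ℂ)‖ = s
          simp [abs_of_nonneg hs0]
        have e1 : ‖((WithLp.equiv 2 (Fin 4 → ℂ)).symm ![(s:ℂ), (a:ℂ), (b:ℂ) * Complex.I, 0]) 1‖ = a := by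
          show ‖(a:ℂ)‖ = a
          simp [abs_of_nonneg ha0]
        have e2 : ‖((WithLp.equiv 2 (Fin 4 → ℂ)).symm ![(s:ℂ), (a:ℂ), (b:ℂ) * Complex.I, 0]) 2‖ = b := by
          show ‖(b:ℂ) * Complex.I‖ = b
          simp [abs_of_nonneg hb0]
        have e3 : ‖((WithLp.equiv 2 (Fin 4 → ℂ)).symm ![(s:ℂ), (a:ℂ), (b:ℂ) * Complex.I, 0]) 3‖ = 0 := by
          show ‖(0:ℂ)‖ = 0
          simp
        rw [e0, e1, e2, e3, haa, hbb]
        have : s ^ 2 + (1 - s ^ 2 - s ^ d) / 2 + (1 - s ^ 2 + s ^ d) / 2 + 0 ^ 2 = 1 := by ring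
        rw [this, Real.sqrt_one]
      · show ‖(s:ℂ)‖ = s
        simp [abs_of_nonneg hs0]
end
end
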